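/- Let t, u, v : ℝ² → ℝ be differentiable functions with u(x,y) ≠ 0 and v(x,y) ≠ 0 for all (x,y), satisfying the total differential system: ∂t/∂x = 2(2−t)/v, ∂t/∂y = −2u(t+1); ∂u/∂x = −2u/v, ∂u/∂y = (2/(3u))(t + v⁻³ − 2u³ − 1); ∂v/∂x = (2/3)(v³(t−u³) + 2), ∂v/∂y = 2uv. Define C = (1/3)((t − u³)v² − v⁻¹) and D = (1/3)v(t+1). Then C and D are first integrals in the y-direction: ∂C/∂y = 0 and ∂D/∂y = 0 everywhere. -/

import Mathlib

/-! For fixed `x`, the `y`-equations form an autonomous system for `(t, u, v)`, and `C`, `D`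
are functions of the state `(t, u, v)` whose derivative along that system vanishes identically:
for `D` the two terms `±2uv(t + 1)` cancel, for `C` the `u`-equation turns `3u²u'` into
`2u(t + v⁻³ - 2u³ - 1)`, after which everything cancels. -/

noncomputable def firstIntegralC (t u v : ℝ) : ℝ := 1 / 3 * ((t - u ^ 3) * v ^ 2 - v⁻¹)

noncomputable def firstIntegralD (t v : ℝ) : ℝ := 1 / 3 * (v * (t + 1))

section

variable {t u v : ℝ → ℝ} {y : ℝ}

theorem hasDerivAt_firstIntegralC (hv0 : v y ≠ 0) (ht : HasDerivAt t (-2 * u y * (t y + 1)) y)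
    (hu : HasDerivAt u (2 / (3 * u y) * (t y + v y ^ (-3 : ℤ) - 2 * u y ^ 3 - 1)) y)
    (hv : HasDerivAt v (2 * u y * v y) y) :
    HasDerivAt (fun y => firstIntegralC (t y) (u y) (v y)) 0 y := by
  refine ((((ht.sub (hu.pow 3)).mul (hv.pow 2)).sub (hv.inv hv0)).const_mul
    (1 / 3 : ℝ)).congr_deriv ?_
  simp only [Pi.pow_apply, Pi.sub_apply, zpow_neg]
  field_simp
  ring

theorem hasDerivAt_firstIntegralD (ht : HasDerivAt t (-2 * u y * (t y + 1)) y)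
    (hv : HasDerivAt v (2 * u y * v y) y) :
    HasDerivAt (fun y => firstIntegralD (t y) (v y)) 0 y :=
  ((hv.mul (ht.add_const 1)).const_mul (1 / 3 : ℝ)).congr_deriv (by ring)

end

theorem first_integrals_y_direction
    (t u v : ℝ → ℝ → ℝ)
    (hv : ∀ x y, v x y ≠ 0)
    (hty : ∀ x y, HasDerivAt (fun y' => t x y') (-2 * u x y * (t x y + 1)) y)
    (huy : ∀ x y, HasDerivAt (fun y' => u x y')
      (2 / (3 * u x y) * (t x y + (v x y) ^ (-3 : ℤ) - 2 * (u x y) ^ 3 - 1)) y)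
    (hvy : ∀ x y, HasDerivAt (fun y' => v x y') (2 * u x y * v x y) y)
    (C D : ℝ → ℝ → ℝ)
    (hC : ∀ x y, C x y = (1 / 3) * ((t x y - (u x y) ^ 3) * (v x y) ^ 2 - (v x y)⁻¹))
    (hD : ∀ x y, D x y = (1 / 3) * (v x y * (t x y + 1))) :
    (∀ x y, HasDerivAt (fun y' => C x y') 0 y) ∧
    (∀ x y, HasDerivAt (fun y' => D x y') 0 y) := by
  refine ⟨fun x y => ?_, fun x y => ?_⟩
  · exact (hasDerivAt_firstIntegralC (hv x y) (hty x y) (huy x y) (hvy x y)).congr_of_eventuallyEq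
      (.of_forall (hC x))
  · exact (hasDerivAt_firstIntegralD (hty x y) (hvy x y)).congr_of_eventuallyEq (.of_forall (hD x))
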